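/- arXiv:2604.13782 — 2 statements merged into one kernel-verified Lean document; each statement's English description precedes it below -/
import Mathlib

section
/- The identification Υ conjugates the induced action of the perturbed Laguerre discrete system on the Picard lattice to the translation T_KNY: Υ ∘ Ψ = T_KNY ∘ Υ. -/
/-- The Picard lattice `Pic` of the KNY `D₅⁽¹⁾` surfaces, with basis `H_q, H_p, E_1, …, E_8`
(coordinate `0` is `H_q`, coordinate `1` is `H_p`, coordinates `2,…,9` are `E_1,…,E_8`). -/
abbrev Pic : Type := Fin 10 → ℤ

/-- The Picard lattice `Pic_Y` of the surfaces from the perturbed Laguerre weight,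
with basis `H_f, H_g, L_1, …, L_8`
(coordinate `0` is `H_f`, coordinate `1` is `H_g`, coordinates `2,…,9` are `L_1,…,L_8`). -/
abbrev PicY : Type := Fin 10 → ℤ

/-- The linear map sending the `j`-th basis vector to `v j`. -/
def mkMap (v : Fin 10 → (Fin 10 → ℤ)) : (Fin 10 → ℤ) →ₗ[ℤ] (Fin 10 → ℤ) :=
  Matrix.toLin' (Matrix.of fun i j => v j i)

/-- The identification `Υ : Pic_Y → Pic`, given by its values on the basis
`H_f, H_g, L_1, …, L_8` of `Pic_Y`, each expressed in the basis `H_q, H_p, E_1, …, E_8`: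
`Υ(H_f) = H_q+H_p-E_5-E_6`, `Υ(H_g) = H_q+2H_p-E_1-E_3-E_5-E_6`,
`Υ(L_1) = H_q+H_p-E_1-E_5-E_6`, `Υ(L_2) = E_2`, `Υ(L_3) = H_p-E_6`, `Υ(L_4) = H_p-E_5`,
`Υ(L_5) = E_7`, `Υ(L_6) = E_8`, `Υ(L_7) = H_q+H_p-E_3-E_5-E_6`, `Υ(L_8) = E_4`. -/
def Υ : PicY →ₗ[ℤ] Pic := mkMap
  ![![1, 1, 0, 0, 0, 0, -1, -1, 0, 0],
    ![1, 2, -1, 0, -1, 0, -1, -1, 0, 0],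
    ![1, 1, -1, 0, 0, 0, -1, -1, 0, 0],
    ![0, 0, 0, 1, 0, 0, 0, 0, 0, 0],
    ![0, 1, 0, 0, 0, 0, 0, -1, 0, 0],
    ![0, 1, 0, 0, 0, 0, -1, 0, 0, 0],
    ![0, 0, 0, 0, 0, 0, 0, 0, 1, 0],
    ![0, 0, 0, 0, 0, 0, 0, 0, 0, 1],
    ![1, 1, 0, 0, -1, 0, -1, -1, 0, 0],
    ![0, 0, 0, 0, 0, 1, 0, 0, 0, 0]]

/-- The induced action `Ψ : Pic_Y → Pic_Y` of the perturbed Laguerre discrete system,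
given by its values on the basis `H_f, H_g, L_1, …, L_8`. -/
def Ψ : PicY →ₗ[ℤ] PicY := mkMap
  ![![5, 2, -1, -1, -2, -2, -2, -2, -1, -1],
    ![2, 1, 0, 0, -1, -1, -1, -1, 0, 0],
    ![2, 1, 0, -1, -1, -1, -1, -1, 0, 0],
    ![2, 1, -1, 0, -1, -1, -1, -1, 0, 0],
    ![1, 0, 0, 0, 0, 0, 0, -1, 0, 0],
    ![1, 0, 0, 0, 0, 0, -1, 0, 0, 0],
    ![1, 0, 0, 0, 0, -1, 0, 0, 0, 0],
    ![1, 0, 0, 0, -1, 0, 0, 0, 0, 0],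
    ![2, 1, 0, 0, -1, -1, -1, -1, 0, -1],
    ![2, 1, 0, 0, -1, -1, -1, -1, -1, 0]]

/-- The ℤ-linear map `T_KNY` on `Pic`, given by its values on the basis
`H_q, H_p, E_1, …, E_8` (each row lists coordinates w.r.t. that basis). -/
def TKNY : Pic →ₗ[ℤ] Pic := mkMap
  ![![5, 2, -1, -1, -1, -1, -2, -2, -2, -2],
    ![2, 1, 0, 0, 0, 0, -1, -1, -1, -1],
    ![2, 1, 0, 0, 0, -1, -1, -1, -1, -1],
    ![2, 1, 0, 0, -1, 0, -1, -1, -1, -1],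
    ![2, 1, 0, -1, 0, 0, -1, -1, -1, -1],
    ![2, 1, -1, 0, 0, 0, -1, -1, -1, -1],
    ![1, 0, 0, 0, 0, 0, 0, 0, 0, -1],
    ![1, 0, 0, 0, 0, 0, 0, 0, -1, 0],
    ![1, 0, 0, 0, 0, 0, 0, -1, 0, 0],
    ![1, 0, 0, 0, 0, 0, -1, 0, 0, 0]]

/-- The identification `Υ` conjugates the induced action `Ψ` of the perturbed Laguerre
discrete system on the Picard lattice to the translation `T_KNY`: `Υ ∘ Ψ = T_KNY ∘ Υ`. -/
theorem upsilon_conjugates_Psi_to_TKNY : Υ ∘ₗ Ψ = TKNY ∘ₗ Υ := by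
  unfold Υ Ψ TKNY mkMap
  rw [← Matrix.toLin'_mul, ← Matrix.toLin'_mul]
  congr 1
  decide
end

section
/- The pointwise stabiliser of α₂ in G equals the subgroup of G generated by s₀, s₁, s₀′, s₁′ and τ: {g ∈ G : g(α₂) = α₂} = ⟨s₀, s₁, s₀′, s₁′, τ⟩. -/
/-- The intersection form on `Pic` in the basis `H_q, H_p, E_1, …, E_8`:
`H_q•H_p = 1`, `H_q•H_q = H_p•H_p = 0`, `H_q•E_i = H_p•E_i = 0`, `E_i•E_j = -δ_ij`.
(Coordinate `0` is `H_q`, coordinate `1` is `H_p`, coordinates `2,…,9` are `E_1,…,E_8`.) -/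
def bil (u v : Pic) : ℤ :=
  u 0 * v 1 + u 1 * v 0 - u 2 * v 2 - u 3 * v 3 - u 4 * v 4 - u 5 * v 5
    - u 6 * v 6 - u 7 * v 7 - u 8 * v 8 - u 9 * v 9

/-- `α₀ = H_p - E_1 - E_2` -/
def α₀ : Pic := ![0, 1, -1, -1, 0, 0, 0, 0, 0, 0]
/-- `α₁ = H_q - E_5 - E_6` -/
def α₁ : Pic := ![1, 0, 0, 0, 0, 0, -1, -1, 0, 0]
/-- `α₂ = H_p - E_3 - E_4` -/
def α₂ : Pic := ![0, 1, 0, 0, -1, -1, 0, 0, 0, 0]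
/-- `α₃ = H_q - E_7 - E_8` -/
def α₃ : Pic := ![1, 0, 0, 0, 0, 0, 0, 0, -1, -1]
/-- `δ = α₀ + α₁ + α₂ + α₃ = 2H_q + 2H_p - E_1 - ⋯ - E_8` -/
def δv : Pic := ![2, 2, -1, -1, -1, -1, -1, -1, -1, -1]

/-- The reflection `F ↦ F + (F • a) a`. -/
def reflE (a : Pic) : Module.End ℤ Pic where
  toFun F := F + bil F a • a
  map_add' x y := by
    show x + y + bil (x + y) a • a = (x + bil x a • a) + (y + bil y a • a)
    have h : bil (x + y) a = bil x a + bil y a := by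
      simp only [bil, Pi.add_apply]; ring
    rw [h, add_smul]; abel
  map_smul' c x := by
    show c • x + bil (c • x) a • a = c • (x + bil x a • a)
    have h : bil (c • x) a = c * bil x a := by
      simp only [bil, Pi.smul_apply, smul_eq_mul]; ring
    rw [h, mul_smul, smul_add]

def w0 : Module.End ℤ Pic := reflE α₀
def w1 : Module.End ℤ Pic := reflE α₁
def w2 : Module.End ℤ Pic := reflE α₂
def w3 : Module.End ℤ Pic := reflE α₃

/-- The linear map permuting coordinates, `(permL p v) i = v (p i)`;
for an involution `p` it sends the basis vector `e_j` to `e_(p j)`. -/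
def permL (p : Fin 10 → Fin 10) : Module.End ℤ Pic := LinearMap.funLeft ℤ ℤ p

/-- `σ₁` permutes the basis by `(H_q H_p)(E_1 E_7)(E_2 E_8)(E_3 E_5)(E_4 E_6)`. -/
def σ₁ : Module.End ℤ Pic := permL ![1, 0, 8, 9, 6, 7, 4, 5, 2, 3]
/-- `σ₂` permutes the basis by `(E_1 E_3)(E_2 E_4)`. -/
def σ₂ : Module.End ℤ Pic := permL ![0, 1, 4, 5, 2, 3, 6, 7, 8, 9]
/-- `ρ = σ₁ ∘ σ₂`, which permutes the basis by `(H_q H_p)(E_1 E_5 E_3 E_7)(E_2 E_6 E_4 E_8)`. -/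
def ρ : Module.End ℤ Pic := σ₁ * σ₂

theorem reflE_sq (a : Pic) (ha : bil a a = -2) : reflE a * reflE a = 1 := by
  apply LinearMap.ext
  intro F
  show reflE a (reflE a F) = F
  simp only [reflE, LinearMap.coe_mk, AddHom.coe_mk]
  have h : bil (F + bil F a • a) a = bil F a + bil F a * bil a a := by
    simp only [bil, Pi.add_apply, Pi.smul_apply, smul_eq_mul]; ring
  rw [h, ha]
  module

/-- The reflection as a ℤ-linear automorphism of `Pic`. -/
def reflU (a : Pic) (ha : bil a a = -2) : (Module.End ℤ Pic)ˣ :=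
  ⟨reflE a, reflE a, reflE_sq a ha, reflE_sq a ha⟩

def w0u : (Module.End ℤ Pic)ˣ := reflU α₀ (by decide)
def w1u : (Module.End ℤ Pic)ˣ := reflU α₁ (by decide)
def w2u : (Module.End ℤ Pic)ˣ := reflU α₂ (by decide)
def w3u : (Module.End ℤ Pic)ˣ := reflU α₃ (by decide)

theorem permL_sq (p : Fin 10 → Fin 10) (hp : ∀ i, p (p i) = i) :
    permL p * permL p = 1 := by
  apply LinearMap.ext
  intro v
  funext i
  simp [permL, Module.End.mul_apply, LinearMap.funLeft_apply, hp]

/-- A coordinate permutation by an involution, as a ℤ-linear automorphism of `Pic`. -/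
def permU (p : Fin 10 → Fin 10) (hp : ∀ i, p (p i) = i) : (Module.End ℤ Pic)ˣ :=
  ⟨permL p, permL p, permL_sq p hp, permL_sq p hp⟩

/-- `σ₁` permutes the basis by `(H_q H_p)(E_1 E_7)(E_2 E_8)(E_3 E_5)(E_4 E_6)`. -/
def σ₁u : (Module.End ℤ Pic)ˣ := permU ![1, 0, 8, 9, 6, 7, 4, 5, 2, 3] (by decide)
/-- `σ₂` permutes the basis by `(E_1 E_3)(E_2 E_4)`. -/
def σ₂u : (Module.End ℤ Pic)ˣ := permU ![0, 1, 4, 5, 2, 3, 6, 7, 8, 9] (by decide)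

/-- The extended affine Weyl group `Ŵ(A₃⁽¹⁾)`: the subgroup of the group of ℤ-linear
automorphisms of `Pic` generated by `w₀, w₁, w₂, w₃, σ₁, σ₂`. -/
def G : Subgroup (Module.End ℤ Pic)ˣ :=
  Subgroup.closure {w0u, w1u, w2u, w3u, σ₁u, σ₂u}

def s₀ : (Module.End ℤ Pic)ˣ := w0u
def s₁ : (Module.End ℤ Pic)ˣ := w3u * w1u * w2u * w1u * w3u
def s₀' : (Module.End ℤ Pic)ˣ := σ₂u * w3u * w2u * w0u * w3u
def s₁' : (Module.End ℤ Pic)ˣ := σ₁u * σ₂u * σ₁u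
def τ : (Module.End ℤ Pic)ˣ := σ₂u * σ₁u * σ₂u * w2u * w3u

def Hs : Subgroup (Module.End ℤ Pic)ˣ := Subgroup.closure ({s₀, s₁, s₀', s₁', τ} : Set (Module.End ℤ Pic)ˣ)
def Uu : (Module.End ℤ Pic)ˣ := σ₂u * w0u * w3u * w1u
def Bv : Fin 12 → Pic := ![![0, 1, -1, -1, 0, 0, 0, 0, 0, 0], ![1, 1, -1, -1, 0, 0, -1, -1, 0, 0], ![1, 2, -1, -1, -1, -1, -1, -1, 0, 0], ![1, 0, 0, 0, 0, 0, -1, -1, 0, 0], ![1, 1, 0, 0, -1, -1, -1, -1, 0, 0], ![2, 1, 0, 0, -1, -1, -1, -1, -1, -1], ![0, 1, 0, 0, -1, -1, 0, 0, 0, 0], ![1, 1, 0, 0, -1, -1, 0, 0, -1, -1], ![1, 2, -1, -1, -1, -1, 0, 0, -1, -1], ![1, 0, 0, 0, 0, 0, 0, 0, -1, -1], ![1, 1, -1, -1, 0, 0, 0, 0, -1, -1], ![2, 1, -1, -1, 0, 0, -1, -1, -1, -1]]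
def Rr : Fin 12 → (Module.End ℤ Pic)ˣ := ![(σ₂u), (σ₂u * w1u), (w0u * w1u), (σ₁u), (w1u), (w3u * w1u), (1), (w3u), (w0u * w3u), (w2u * w3u), (σ₂u * w3u), (σ₂u * w3u * w1u)]

lemma mm0 : s₀ ∈ Hs := Subgroup.subset_closure (by simp)
lemma mm1 : s₁ ∈ Hs := Subgroup.subset_closure (by simp)
lemma mm2 : s₀' ∈ Hs := Subgroup.subset_closure (by simp)
lemma mm3 : s₁' ∈ Hs := Subgroup.subset_closure (by simp)
lemma mm4 : τ ∈ Hs := Subgroup.subset_closure (by simp)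

lemma end_ext {f g : Module.End ℤ Pic}
    (h : ∀ i : Fin 10, f (Pi.single i 1) = g (Pi.single i 1)) : f = g := by
  apply Module.Basis.ext (Pi.basisFun ℤ (Fin 10))
  intro i
  simpa [Pi.basisFun_apply] using h i

lemma unit_eq {a b : (Module.End ℤ Pic)ˣ}
    (h : ∀ i : Fin 10, (↑a : Module.End ℤ Pic) (Pi.single i 1)
      = (↑b : Module.End ℤ Pic) (Pi.single i 1)) : a = b :=
  Units.ext (end_ext h)

lemma mem_of_eq {a : (Module.End ℤ Pic)ˣ} (b : (Module.End ℤ Pic)ˣ)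
    (h : ∀ i : Fin 10, (↑a : Module.End ℤ Pic) (Pi.single i 1)
      = (↑b : Module.End ℤ Pic) (Pi.single i 1)) (hb : b ∈ Hs) : a ∈ Hs :=
  (unit_eq h) ▸ hb

lemma conjU_mem : ∀ x ∈ Hs, Uu * x * Uu⁻¹ ∈ Hs := by
  intro x hx
  induction hx using Subgroup.closure_induction with
  | mem y hy =>
    simp only [Set.mem_insert_iff, Set.mem_singleton_iff] at hy
    rcases hy with rfl | rfl | rfl | rfl | rfl
    · exact mem_of_eq (s₁) (by decide) (mm1)
    · exact mem_of_eq (s₀) (by decide) (mm0)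
    · exact mem_of_eq (s₁' * s₀' * s₁') (by decide) (mul_mem (mul_mem (mm3) (mm2)) (mm3))
    · exact mem_of_eq (s₁') (by decide) (mm3)
    · exact mem_of_eq (τ * s₀' * s₁') (by decide) (mul_mem (mul_mem (mm4) (mm2)) (mm3))
  | one => exact mem_of_eq 1 (by decide) (one_mem Hs)
  | mul y z hy hz py pz =>
    have e : Uu * (y * z) * Uu⁻¹ = (Uu * y * Uu⁻¹) * (Uu * z * Uu⁻¹) := by group
    rw [e]; exact mul_mem py pz
  | inv y hy py =>
    have e : Uu * y⁻¹ * Uu⁻¹ = (Uu * y * Uu⁻¹)⁻¹ := by group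
    rw [e]; exact inv_mem py

lemma conjUi_mem : ∀ x ∈ Hs, Uu⁻¹ * x * Uu ∈ Hs := by
  intro x hx
  induction hx using Subgroup.closure_induction with
  | mem y hy =>
    simp only [Set.mem_insert_iff, Set.mem_singleton_iff] at hy
    rcases hy with rfl | rfl | rfl | rfl | rfl
    · exact mem_of_eq (s₁) (by decide) (mm1)
    · exact mem_of_eq (s₀) (by decide) (mm0)
    · exact mem_of_eq (s₁' * s₀' * s₁') (by decide) (mul_mem (mul_mem (mm3) (mm2)) (mm3))
    · exact mem_of_eq (s₁') (by decide) (mm3)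
    · exact mem_of_eq (τ * s₀' * s₁') (by decide) (mul_mem (mul_mem (mm4) (mm2)) (mm3))
  | one => exact mem_of_eq 1 (by decide) (one_mem Hs)
  | mul y z hy hz py pz =>
    have e : Uu⁻¹ * (y * z) * Uu = (Uu⁻¹ * y * Uu) * (Uu⁻¹ * z * Uu) := by group
    rw [e]; exact mul_mem py pz
  | inv y hy py =>
    have e : Uu⁻¹ * y⁻¹ * Uu = (Uu⁻¹ * y * Uu)⁻¹ := by group
    rw [e]; exact inv_mem py

lemma conj_zpow_mem : ∀ (n : ℤ), ∀ h ∈ Hs, Uu ^ (-n) * h * Uu ^ n ∈ Hs := by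
  intro n
  induction n using Int.induction_on with
  | zero => intro h hh; simpa using hh
  | succ k ih =>
    intro h hh
    have e : Uu ^ (-((k:ℤ)+1)) * h * Uu ^ ((k:ℤ)+1)
        = Uu ^ (-(k:ℤ)) * (Uu⁻¹ * h * Uu) * Uu ^ (k:ℤ) := by group
    rw [e]; exact ih _ (conjUi_mem h hh)
  | pred k ih =>
    intro h hh
    have e : Uu ^ (-(-(k:ℤ)-1)) * h * Uu ^ (-(k:ℤ)-1)
        = Uu ^ (-(-(k:ℤ))) * (Uu * h * Uu⁻¹) * Uu ^ (-(k:ℤ)) := by group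
    rw [e]; exact ih _ (conjU_mem h hh)

def Pp (g : (Module.End ℤ Pic)ˣ) : Prop :=
  ∀ (i : Fin 12) (n : ℤ), ∃ j : Fin 12, ∃ m : ℤ, ∃ h ∈ Hs,
    (↑g : Module.End ℤ Pic) (Bv i + n • δv) = Bv j + m • δv ∧
    g * (Rr i * Uu ^ n) = Rr j * Uu ^ m * h
def jw0 : Fin 12 → Fin 12 := ![5, 3, 4, 1, 2, 0, 6, 8, 7, 10, 9, 11]
def cw0 : Fin 12 → ℤ := ![-1, 0, 0, 0, 0, 1, 0, 0, 0, 0, 0, 0]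
def Ww0 : Fin 12 → (Module.End ℤ Pic)ˣ := ![(1), (τ * s₁'), (1), (τ * s₀'), (1), (1), (s₀), (1), (1), (s₀'), (s₀'), (s₁)]

lemma Wmem_w0 : ∀ i : Fin 12, Ww0 i ∈ Hs := by
  intro i; fin_cases i
  · exact one_mem Hs
  · exact mul_mem (mm4) (mm3)
  · exact one_mem Hs
  · exact mul_mem (mm4) (mm2)
  · exact one_mem Hs
  · exact one_mem Hs
  · exact mm0
  · exact one_mem Hs
  · exact one_mem Hs
  · exact mm2
  · exact mm2
  · exact mm1

lemma zeq_w0 : ∀ (i : Fin 12) (k : Fin 10),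
    (↑(Uu ^ (-(cw0 i)) * (Rr (jw0 i))⁻¹ * w0u * Rr i) : Module.End ℤ Pic) (Pi.single k 1)
      = (↑(Ww0 i) : Module.End ℤ Pic) (Pi.single k 1) := by decide

lemma zmem_w0 (i : Fin 12) : Uu ^ (-(cw0 i)) * (Rr (jw0 i))⁻¹ * w0u * Rr i ∈ Hs :=
  mem_of_eq (Ww0 i) (zeq_w0 i) (Wmem_w0 i)

lemma bv_w0 : ∀ i : Fin 12, (↑w0u : Module.End ℤ Pic) (Bv i) = Bv (jw0 i) + cw0 i • δv := by
  decide

lemma dv_w0 : (↑w0u : Module.End ℤ Pic) δv = δv := by decide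

lemma step_w0 : Pp w0u := by
  intro i n
  refine ⟨jw0 i, n + cw0 i,
    Uu ^ (-n) * (Uu ^ (-(cw0 i)) * (Rr (jw0 i))⁻¹ * w0u * Rr i) * Uu ^ n,
    conj_zpow_mem n _ (zmem_w0 i), ?_, ?_⟩
  · rw [map_add, map_smul, bv_w0 i, dv_w0, add_smul]
    abel
  · group
def jw1 : Fin 12 → Fin 12 := ![1, 0, 2, 8, 6, 7, 4, 5, 3, 9, 11, 10]
def cw1 : Fin 12 → ℤ := ![0, 0, 0, -1, 0, 0, 0, 0, 1, 0, 0, 0]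
def Ww1 : Fin 12 → (Module.End ℤ Pic)ˣ := ![(1), (1), (s₀), (τ * s₀'), (1), (1), (1), (1), (τ * s₀'), (s₁), (1), (1)]

lemma Wmem_w1 : ∀ i : Fin 12, Ww1 i ∈ Hs := by
  intro i; fin_cases i
  · exact one_mem Hs
  · exact one_mem Hs
  · exact mm0
  · exact mul_mem (mm4) (mm2)
  · exact one_mem Hs
  · exact one_mem Hs
  · exact one_mem Hs
  · exact one_mem Hs
  · exact mul_mem (mm4) (mm2)
  · exact mm1
  · exact one_mem Hs
  · exact one_mem Hs

lemma zeq_w1 : ∀ (i : Fin 12) (k : Fin 10),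
    (↑(Uu ^ (-(cw1 i)) * (Rr (jw1 i))⁻¹ * w1u * Rr i) : Module.End ℤ Pic) (Pi.single k 1)
      = (↑(Ww1 i) : Module.End ℤ Pic) (Pi.single k 1) := by decide

lemma zmem_w1 (i : Fin 12) : Uu ^ (-(cw1 i)) * (Rr (jw1 i))⁻¹ * w1u * Rr i ∈ Hs :=
  mem_of_eq (Ww1 i) (zeq_w1 i) (Wmem_w1 i)

lemma bv_w1 : ∀ i : Fin 12, (↑w1u : Module.End ℤ Pic) (Bv i) = Bv (jw1 i) + cw1 i • δv := by
  decide

lemma dv_w1 : (↑w1u : Module.End ℤ Pic) δv = δv := by decide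

lemma step_w1 : Pp w1u := by
  intro i n
  refine ⟨jw1 i, n + cw1 i,
    Uu ^ (-n) * (Uu ^ (-(cw1 i)) * (Rr (jw1 i))⁻¹ * w1u * Rr i) * Uu ^ n,
    conj_zpow_mem n _ (zmem_w1 i), ?_, ?_⟩
  · rw [map_add, map_smul, bv_w1 i, dv_w1, add_smul]
    abel
  · group
def jw2 : Fin 12 → Fin 12 := ![0, 2, 1, 4, 3, 5, 11, 9, 10, 7, 8, 6]
def cw2 : Fin 12 → ℤ := ![0, 0, 0, 0, 0, 0, -1, 0, 0, 0, 0, 1]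
def Ww2 : Fin 12 → (Module.End ℤ Pic)ˣ := ![(s₀), (s₁' * s₀' * s₁'), (s₁' * s₀' * s₁'), (τ * s₀' * s₁'), (τ * s₀' * s₁'), (s₁), (1), (1), (s₀'), (1), (s₀'), (1)]

lemma Wmem_w2 : ∀ i : Fin 12, Ww2 i ∈ Hs := by
  intro i; fin_cases i
  · exact mm0
  · exact mul_mem (mul_mem (mm3) (mm2)) (mm3)
  · exact mul_mem (mul_mem (mm3) (mm2)) (mm3)
  · exact mul_mem (mul_mem (mm4) (mm2)) (mm3)
  · exact mul_mem (mul_mem (mm4) (mm2)) (mm3)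
  · exact mm1
  · exact one_mem Hs
  · exact one_mem Hs
  · exact mm2
  · exact one_mem Hs
  · exact mm2
  · exact one_mem Hs

lemma zeq_w2 : ∀ (i : Fin 12) (k : Fin 10),
    (↑(Uu ^ (-(cw2 i)) * (Rr (jw2 i))⁻¹ * w2u * Rr i) : Module.End ℤ Pic) (Pi.single k 1)
      = (↑(Ww2 i) : Module.End ℤ Pic) (Pi.single k 1) := by decide

lemma zmem_w2 (i : Fin 12) : Uu ^ (-(cw2 i)) * (Rr (jw2 i))⁻¹ * w2u * Rr i ∈ Hs :=
  mem_of_eq (Ww2 i) (zeq_w2 i) (Wmem_w2 i)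

lemma bv_w2 : ∀ i : Fin 12, (↑w2u : Module.End ℤ Pic) (Bv i) = Bv (jw2 i) + cw2 i • δv := by
  decide

lemma dv_w2 : (↑w2u : Module.End ℤ Pic) δv = δv := by decide

lemma step_w2 : Pp w2u := by
  intro i n
  refine ⟨jw2 i, n + cw2 i,
    Uu ^ (-n) * (Uu ^ (-(cw2 i)) * (Rr (jw2 i))⁻¹ * w2u * Rr i) * Uu ^ n,
    conj_zpow_mem n _ (zmem_w2 i), ?_, ?_⟩
  · rw [map_add, map_smul, bv_w2 i, dv_w2, add_smul]
    abel
  · group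
def jw3 : Fin 12 → Fin 12 := ![10, 11, 9, 3, 5, 4, 7, 6, 8, 2, 0, 1]
def cw3 : Fin 12 → ℤ := ![0, 0, 1, 0, 0, 0, 0, 0, 0, -1, 0, 0]
def Ww3 : Fin 12 → (Module.End ℤ Pic)ˣ := ![(1), (1), (s₁' * s₀' * s₁'), (s₀), (1), (1), (1), (1), (s₀), (s₀'), (1), (1)]

lemma Wmem_w3 : ∀ i : Fin 12, Ww3 i ∈ Hs := by
  intro i; fin_cases i
  · exact one_mem Hs
  · exact one_mem Hs
  · exact mul_mem (mul_mem (mm3) (mm2)) (mm3)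
  · exact mm0
  · exact one_mem Hs
  · exact one_mem Hs
  · exact one_mem Hs
  · exact one_mem Hs
  · exact mm0
  · exact mm2
  · exact one_mem Hs
  · exact one_mem Hs

lemma zeq_w3 : ∀ (i : Fin 12) (k : Fin 10),
    (↑(Uu ^ (-(cw3 i)) * (Rr (jw3 i))⁻¹ * w3u * Rr i) : Module.End ℤ Pic) (Pi.single k 1)
      = (↑(Ww3 i) : Module.End ℤ Pic) (Pi.single k 1) := by decide

lemma zmem_w3 (i : Fin 12) : Uu ^ (-(cw3 i)) * (Rr (jw3 i))⁻¹ * w3u * Rr i ∈ Hs :=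
  mem_of_eq (Ww3 i) (zeq_w3 i) (Wmem_w3 i)

lemma bv_w3 : ∀ i : Fin 12, (↑w3u : Module.End ℤ Pic) (Bv i) = Bv (jw3 i) + cw3 i • δv := by
  decide

lemma dv_w3 : (↑w3u : Module.End ℤ Pic) δv = δv := by decide

lemma step_w3 : Pp w3u := by
  intro i n
  refine ⟨jw3 i, n + cw3 i,
    Uu ^ (-n) * (Uu ^ (-(cw3 i)) * (Rr (jw3 i))⁻¹ * w3u * Rr i) * Uu ^ n,
    conj_zpow_mem n _ (zmem_w3 i), ?_, ?_⟩
  · rw [map_add, map_smul, bv_w3 i, dv_w3, add_smul]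
    abel
  · group
def jsa : Fin 12 → Fin 12 := ![9, 7, 5, 6, 4, 2, 3, 1, 11, 0, 10, 8]
def csa : Fin 12 → ℤ := ![0, 0, 0, 0, 0, 0, 0, 0, 0, 0, 0, 0]
def Wsa : Fin 12 → (Module.End ℤ Pic)ˣ := ![(τ * s₁'), (τ * s₁'), (τ * s₀' * s₁'), (1), (τ * s₀' * s₁'), (τ * s₀' * s₁'), (1), (τ * s₀'), (τ * s₀'), (τ * s₀'), (τ), (τ * s₁')]

lemma Wmem_sa : ∀ i : Fin 12, Wsa i ∈ Hs := by
  intro i; fin_cases i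
  · exact mul_mem (mm4) (mm3)
  · exact mul_mem (mm4) (mm3)
  · exact mul_mem (mul_mem (mm4) (mm2)) (mm3)
  · exact one_mem Hs
  · exact mul_mem (mul_mem (mm4) (mm2)) (mm3)
  · exact mul_mem (mul_mem (mm4) (mm2)) (mm3)
  · exact one_mem Hs
  · exact mul_mem (mm4) (mm2)
  · exact mul_mem (mm4) (mm2)
  · exact mul_mem (mm4) (mm2)
  · exact mm4
  · exact mul_mem (mm4) (mm3)

lemma zeq_sa : ∀ (i : Fin 12) (k : Fin 10),
    (↑(Uu ^ (-(csa i)) * (Rr (jsa i))⁻¹ * σ₁u * Rr i) : Module.End ℤ Pic) (Pi.single k 1)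
      = (↑(Wsa i) : Module.End ℤ Pic) (Pi.single k 1) := by decide

lemma zmem_sa (i : Fin 12) : Uu ^ (-(csa i)) * (Rr (jsa i))⁻¹ * σ₁u * Rr i ∈ Hs :=
  mem_of_eq (Wsa i) (zeq_sa i) (Wmem_sa i)

lemma bv_sa : ∀ i : Fin 12, (↑σ₁u : Module.End ℤ Pic) (Bv i) = Bv (jsa i) + csa i • δv := by
  decide

lemma dv_sa : (↑σ₁u : Module.End ℤ Pic) δv = δv := by decide

lemma step_sa : Pp σ₁u := by
  intro i n
  refine ⟨jsa i, n + csa i,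
    Uu ^ (-n) * (Uu ^ (-(csa i)) * (Rr (jsa i))⁻¹ * σ₁u * Rr i) * Uu ^ n,
    conj_zpow_mem n _ (zmem_sa i), ?_, ?_⟩
  · rw [map_add, map_smul, bv_sa i, dv_sa, add_smul]
    abel
  · group
def jsb : Fin 12 → Fin 12 := ![6, 4, 2, 3, 1, 11, 0, 10, 8, 9, 7, 5]
def csb : Fin 12 → ℤ := ![0, 0, 0, 0, 0, 0, 0, 0, 0, 0, 0, 0]
def Wsb : Fin 12 → (Module.End ℤ Pic)ˣ := ![(1), (1), (s₁' * s₀' * s₁'), (s₁'), (1), (1), (1), (1), (s₀'), (s₀'), (1), (1)]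

lemma Wmem_sb : ∀ i : Fin 12, Wsb i ∈ Hs := by
  intro i; fin_cases i
  · exact one_mem Hs
  · exact one_mem Hs
  · exact mul_mem (mul_mem (mm3) (mm2)) (mm3)
  · exact mm3
  · exact one_mem Hs
  · exact one_mem Hs
  · exact one_mem Hs
  · exact one_mem Hs
  · exact mm2
  · exact mm2
  · exact one_mem Hs
  · exact one_mem Hs

lemma zeq_sb : ∀ (i : Fin 12) (k : Fin 10),
    (↑(Uu ^ (-(csb i)) * (Rr (jsb i))⁻¹ * σ₂u * Rr i) : Module.End ℤ Pic) (Pi.single k 1)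
      = (↑(Wsb i) : Module.End ℤ Pic) (Pi.single k 1) := by decide

lemma zmem_sb (i : Fin 12) : Uu ^ (-(csb i)) * (Rr (jsb i))⁻¹ * σ₂u * Rr i ∈ Hs :=
  mem_of_eq (Wsb i) (zeq_sb i) (Wmem_sb i)

lemma bv_sb : ∀ i : Fin 12, (↑σ₂u : Module.End ℤ Pic) (Bv i) = Bv (jsb i) + csb i • δv := by
  decide

lemma dv_sb : (↑σ₂u : Module.End ℤ Pic) δv = δv := by decide

lemma step_sb : Pp σ₂u := by
  intro i n
  refine ⟨jsb i, n + csb i,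
    Uu ^ (-n) * (Uu ^ (-(csb i)) * (Rr (jsb i))⁻¹ * σ₂u * Rr i) * Uu ^ n,
    conj_zpow_mem n _ (zmem_sb i), ?_, ?_⟩
  · rw [map_add, map_smul, bv_sb i, dv_sb, add_smul]
    abel
  · group

lemma Pp_one : Pp 1 := by
  intro i n
  exact ⟨i, n, 1, one_mem Hs, by simp, by simp⟩

lemma Pp_mul {a b : (Module.End ℤ Pic)ˣ} (pa : Pp a) (pb : Pp b) : Pp (a * b) := by
  intro i n
  obtain ⟨j, m, h, hh, hv, he⟩ := pb i n
  obtain ⟨k, l, h2, hh2, hv2, he2⟩ := pa j m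
  refine ⟨k, l, h2 * h, mul_mem hh2 hh, ?_, ?_⟩
  · rw [Units.val_mul, Module.End.mul_apply, hv, hv2]
  · rw [mul_assoc, he, ← mul_assoc, ← mul_assoc, mul_assoc a, he2, mul_assoc]

lemma Pp_of_mem {g : (Module.End ℤ Pic)ˣ} (hg : g ∈ G) : Pp g := by
  have hg2 : g ∈ Submonoid.closure
      (({w0u, w1u, w2u, w3u, σ₁u, σ₂u} : Set (Module.End ℤ Pic)ˣ)
        ∪ ({w0u, w1u, w2u, w3u, σ₁u, σ₂u} : Set (Module.End ℤ Pic)ˣ)⁻¹) := by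
    rw [← Subgroup.closure_toSubmonoid]
    exact hg
  clear hg
  induction hg2 using Submonoid.closure_induction with
  | mem x hx =>
    have hx2 : x ∈ ({w0u, w1u, w2u, w3u, σ₁u, σ₂u} : Set (Module.End ℤ Pic)ˣ) := by
      rcases hx with h | h
      · exact h
      · rw [Set.mem_inv] at h
        simp only [Set.mem_insert_iff, Set.mem_singleton_iff] at h
        rcases h with h | h | h | h | h | h
        · have e : x = w0u := by rw [← inv_inv x, h]; exact Units.ext rfl
          rw [e]; simp
        · have e : x = w1u := by rw [← inv_inv x, h]; exact Units.ext rfl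
          rw [e]; simp
        · have e : x = w2u := by rw [← inv_inv x, h]; exact Units.ext rfl
          rw [e]; simp
        · have e : x = w3u := by rw [← inv_inv x, h]; exact Units.ext rfl
          rw [e]; simp
        · have e : x = σ₁u := by rw [← inv_inv x, h]; exact Units.ext rfl
          rw [e]; simp
        · have e : x = σ₂u := by rw [← inv_inv x, h]; exact Units.ext rfl
          rw [e]; simp
    simp only [Set.mem_insert_iff, Set.mem_singleton_iff] at hx2
    rcases hx2 with rfl | rfl | rfl | rfl | rfl | rfl
    · exact step_w0
    · exact step_w1
    · exact step_w2
    · exact step_w3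
    · exact step_sa
    · exact step_sb
  | one => exact Pp_one
  | mul x y hx hy px py => exact Pp_mul px py


lemma uniq : ∀ (j : Fin 12) (m : ℤ), Bv j + m • δv = α₂ → j = (6 : Fin 12) ∧ m = 0 := by
  intro j m h
  fin_cases j
  · exfalso
    have c0 : (0 : ℤ) + m * (2) = (0 : ℤ) := congrFun h 0
    have c1 : (1 : ℤ) + m * (2) = (1 : ℤ) := congrFun h 1
    have c2 : (-1 : ℤ) + m * (-1) = (0 : ℤ) := congrFun h 2
    have c4 : (0 : ℤ) + m * (-1) = (-1 : ℤ) := congrFun h 4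
    have c6 : (0 : ℤ) + m * (-1) = (0 : ℤ) := congrFun h 6
    have c8 : (0 : ℤ) + m * (-1) = (0 : ℤ) := congrFun h 8
    omega
  · exfalso
    have c0 : (1 : ℤ) + m * (2) = (0 : ℤ) := congrFun h 0
    have c1 : (1 : ℤ) + m * (2) = (1 : ℤ) := congrFun h 1
    have c2 : (-1 : ℤ) + m * (-1) = (0 : ℤ) := congrFun h 2
    have c4 : (0 : ℤ) + m * (-1) = (-1 : ℤ) := congrFun h 4
    have c6 : (-1 : ℤ) + m * (-1) = (0 : ℤ) := congrFun h 6
    have c8 : (0 : ℤ) + m * (-1) = (0 : ℤ) := congrFun h 8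
    omega
  · exfalso
    have c0 : (1 : ℤ) + m * (2) = (0 : ℤ) := congrFun h 0
    have c1 : (2 : ℤ) + m * (2) = (1 : ℤ) := congrFun h 1
    have c2 : (-1 : ℤ) + m * (-1) = (0 : ℤ) := congrFun h 2
    have c4 : (-1 : ℤ) + m * (-1) = (-1 : ℤ) := congrFun h 4
    have c6 : (-1 : ℤ) + m * (-1) = (0 : ℤ) := congrFun h 6
    have c8 : (0 : ℤ) + m * (-1) = (0 : ℤ) := congrFun h 8
    omega
  · exfalso
    have c0 : (1 : ℤ) + m * (2) = (0 : ℤ) := congrFun h 0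
    have c1 : (0 : ℤ) + m * (2) = (1 : ℤ) := congrFun h 1
    have c2 : (0 : ℤ) + m * (-1) = (0 : ℤ) := congrFun h 2
    have c4 : (0 : ℤ) + m * (-1) = (-1 : ℤ) := congrFun h 4
    have c6 : (-1 : ℤ) + m * (-1) = (0 : ℤ) := congrFun h 6
    have c8 : (0 : ℤ) + m * (-1) = (0 : ℤ) := congrFun h 8
    omega
  · exfalso
    have c0 : (1 : ℤ) + m * (2) = (0 : ℤ) := congrFun h 0
    have c1 : (1 : ℤ) + m * (2) = (1 : ℤ) := congrFun h 1
    have c2 : (0 : ℤ) + m * (-1) = (0 : ℤ) := congrFun h 2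
    have c4 : (-1 : ℤ) + m * (-1) = (-1 : ℤ) := congrFun h 4
    have c6 : (-1 : ℤ) + m * (-1) = (0 : ℤ) := congrFun h 6
    have c8 : (0 : ℤ) + m * (-1) = (0 : ℤ) := congrFun h 8
    omega
  · exfalso
    have c0 : (2 : ℤ) + m * (2) = (0 : ℤ) := congrFun h 0
    have c1 : (1 : ℤ) + m * (2) = (1 : ℤ) := congrFun h 1
    have c2 : (0 : ℤ) + m * (-1) = (0 : ℤ) := congrFun h 2
    have c4 : (-1 : ℤ) + m * (-1) = (-1 : ℤ) := congrFun h 4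
    have c6 : (-1 : ℤ) + m * (-1) = (0 : ℤ) := congrFun h 6
    have c8 : (-1 : ℤ) + m * (-1) = (0 : ℤ) := congrFun h 8
    omega
  · refine ⟨by decide, ?_⟩
    have c0 : (0 : ℤ) + m * (2) = (0 : ℤ) := congrFun h 0
    have c1 : (1 : ℤ) + m * (2) = (1 : ℤ) := congrFun h 1
    have c2 : (0 : ℤ) + m * (-1) = (0 : ℤ) := congrFun h 2
    have c4 : (-1 : ℤ) + m * (-1) = (-1 : ℤ) := congrFun h 4
    have c6 : (0 : ℤ) + m * (-1) = (0 : ℤ) := congrFun h 6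
    have c8 : (0 : ℤ) + m * (-1) = (0 : ℤ) := congrFun h 8
    omega
  · exfalso
    have c0 : (1 : ℤ) + m * (2) = (0 : ℤ) := congrFun h 0
    have c1 : (1 : ℤ) + m * (2) = (1 : ℤ) := congrFun h 1
    have c2 : (0 : ℤ) + m * (-1) = (0 : ℤ) := congrFun h 2
    have c4 : (-1 : ℤ) + m * (-1) = (-1 : ℤ) := congrFun h 4
    have c6 : (0 : ℤ) + m * (-1) = (0 : ℤ) := congrFun h 6
    have c8 : (-1 : ℤ) + m * (-1) = (0 : ℤ) := congrFun h 8
    omega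
  · exfalso
    have c0 : (1 : ℤ) + m * (2) = (0 : ℤ) := congrFun h 0
    have c1 : (2 : ℤ) + m * (2) = (1 : ℤ) := congrFun h 1
    have c2 : (-1 : ℤ) + m * (-1) = (0 : ℤ) := congrFun h 2
    have c4 : (-1 : ℤ) + m * (-1) = (-1 : ℤ) := congrFun h 4
    have c6 : (0 : ℤ) + m * (-1) = (0 : ℤ) := congrFun h 6
    have c8 : (-1 : ℤ) + m * (-1) = (0 : ℤ) := congrFun h 8
    omega
  · exfalso
    have c0 : (1 : ℤ) + m * (2) = (0 : ℤ) := congrFun h 0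
    have c1 : (0 : ℤ) + m * (2) = (1 : ℤ) := congrFun h 1
    have c2 : (0 : ℤ) + m * (-1) = (0 : ℤ) := congrFun h 2
    have c4 : (0 : ℤ) + m * (-1) = (-1 : ℤ) := congrFun h 4
    have c6 : (0 : ℤ) + m * (-1) = (0 : ℤ) := congrFun h 6
    have c8 : (-1 : ℤ) + m * (-1) = (0 : ℤ) := congrFun h 8
    omega
  · exfalso
    have c0 : (1 : ℤ) + m * (2) = (0 : ℤ) := congrFun h 0
    have c1 : (1 : ℤ) + m * (2) = (1 : ℤ) := congrFun h 1
    have c2 : (-1 : ℤ) + m * (-1) = (0 : ℤ) := congrFun h 2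
    have c4 : (0 : ℤ) + m * (-1) = (-1 : ℤ) := congrFun h 4
    have c6 : (0 : ℤ) + m * (-1) = (0 : ℤ) := congrFun h 6
    have c8 : (-1 : ℤ) + m * (-1) = (0 : ℤ) := congrFun h 8
    omega
  · exfalso
    have c0 : (2 : ℤ) + m * (2) = (0 : ℤ) := congrFun h 0
    have c1 : (1 : ℤ) + m * (2) = (1 : ℤ) := congrFun h 1
    have c2 : (-1 : ℤ) + m * (-1) = (0 : ℤ) := congrFun h 2
    have c4 : (0 : ℤ) + m * (-1) = (-1 : ℤ) := congrFun h 4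
    have c6 : (-1 : ℤ) + m * (-1) = (0 : ℤ) := congrFun h 6
    have c8 : (-1 : ℤ) + m * (-1) = (0 : ℤ) := congrFun h 8
    omega

def Kst : Subgroup (Module.End ℤ Pic)ˣ where
  carrier := {g | (↑g : Module.End ℤ Pic) α₂ = α₂}
  one_mem' := rfl
  mul_mem' := by
    intro a b ha hb
    show (↑(a * b) : Module.End ℤ Pic) α₂ = α₂
    rw [Units.val_mul, Module.End.mul_apply, hb, ha]
  inv_mem' := by
    intro a ha
    simp only [Set.mem_setOf_eq] at ha ⊢
    calc (↑a⁻¹ : Module.End ℤ Pic) α₂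
        = (↑a⁻¹ : Module.End ℤ Pic) ((↑a : Module.End ℤ Pic) α₂) := by rw [ha]
      _ = α₂ := by
          rw [← Module.End.mul_apply, ← Units.val_mul, inv_mul_cancel, Units.val_one,
            Module.End.one_apply]

lemma gw0 : w0u ∈ G := Subgroup.subset_closure (by simp)
lemma gw1 : w1u ∈ G := Subgroup.subset_closure (by simp)
lemma gw2 : w2u ∈ G := Subgroup.subset_closure (by simp)
lemma gw3 : w3u ∈ G := Subgroup.subset_closure (by simp)
lemma gsa : σ₁u ∈ G := Subgroup.subset_closure (by simp)
lemma gsb : σ₂u ∈ G := Subgroup.subset_closure (by simp)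

lemma Hs_le : Hs ≤ G ⊓ Kst := by
  apply (Subgroup.closure_le _).2
  intro x hx
  simp only [Set.mem_insert_iff, Set.mem_singleton_iff] at hx
  rcases hx with rfl | rfl | rfl | rfl | rfl
  · refine Subgroup.mem_inf.2 ⟨gw0, ?_⟩
    show (↑(s₀) : Module.End ℤ Pic) α₂ = α₂
    decide
  · refine Subgroup.mem_inf.2 ⟨mul_mem (mul_mem (mul_mem (mul_mem gw3 gw1) gw2) gw1) gw3, ?_⟩
    show (↑(s₁) : Module.End ℤ Pic) α₂ = α₂
    decide
  · refine Subgroup.mem_inf.2 ⟨mul_mem (mul_mem (mul_mem (mul_mem gsb gw3) gw2) gw0) gw3, ?_⟩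
    show (↑(s₀') : Module.End ℤ Pic) α₂ = α₂
    decide
  · refine Subgroup.mem_inf.2 ⟨mul_mem (mul_mem gsa gsb) gsa, ?_⟩
    show (↑(s₁') : Module.End ℤ Pic) α₂ = α₂
    decide
  · refine Subgroup.mem_inf.2 ⟨mul_mem (mul_mem (mul_mem (mul_mem gsb gsa) gsb) gw2) gw3, ?_⟩
    show (↑(τ) : Module.End ℤ Pic) α₂ = α₂
    decide

/-- The pointwise stabiliser of `α₂` in `G = Ŵ(A₃⁽¹⁾)` is the subgroup
generated by `s₀, s₁, s₀', s₁', τ`. -/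
theorem stabiliser_eq_closure :
    {g : (Module.End ℤ Pic)ˣ | g ∈ G ∧ (↑g : Module.End ℤ Pic) α₂ = α₂}
      = ↑(Subgroup.closure ({s₀, s₁, s₀', s₁', τ} : Set (Module.End ℤ Pic)ˣ)) := by
  ext g
  simp only [Set.mem_setOf_eq, SetLike.mem_coe]
  constructor
  · rintro ⟨hG, hfix⟩
    obtain ⟨j, m, h, hh, hv, he⟩ := Pp_of_mem hG 6 0
    have hB6 : Bv 6 + (0 : ℤ) • δv = α₂ := by decide
    rw [hB6, hfix] at hv
    obtain ⟨hj, hm⟩ := uniq j m hv.symm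
    subst hj; subst hm
    have hR6 : Rr 6 = 1 := Units.ext rfl
    rw [hR6, zpow_zero, one_mul, mul_one, one_mul] at he
    rw [he]
    exact hh
  · intro hgH
    have hm := Subgroup.mem_inf.1 (Hs_le hgH)
    exact ⟨hm.1, hm.2⟩
end
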